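/- For every n ≥ 1, appending the letter 0 to ψ_1(n) := (n+1)·P_0(n+1) produces a word ending in a square; specifically, ψ_1(n)·0 = (n+1)·R_{n+1}[:−1]·(n+1)·R_{n+1}[:−1] is itself of the form u·yy with yy a square suffix. -/

import Mathlib

def rho (w : List ℕ) : List ℕ := w.flatMap (fun n => [0, n + 1])

def R (n : ℕ) : List ℕ := rho^[n] [0]

def P0 (n : ℕ) : List ℕ := (R (n + 1)).dropLast.dropLast

def psi1 (n : ℕ) : List ℕ := if n = 0 then [2, 0, 2, 1, 0, 1] else (n + 1) :: P0 (n + 1)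

/-! Write `R_m = D_m · m`. Since `ρ(m) = 0 (m+1)`, we get `D_{m+1} = ρ(D_m) · 0`, so
`P_0(m) · 0 = D_{m+1}`, and by induction `D_{m+1} = R_m · D_m`. Hence
`ψ_1(n) · 0 = (n+1) · D_{n+2} = (n+1) · R_{n+1} · D_{n+1} = (n+1) · D_{n+1} · (n+1) · D_{n+1}`. -/

theorem rho_append (u v : List ℕ) : rho (u ++ v) = rho u ++ rho v :=
  List.flatMap_append

theorem R_succ (m : ℕ) : R (m + 1) = rho (R m) :=
  Function.iterate_succ_apply' rho m [0]

theorem rho_concat (u : List ℕ) (a : ℕ) : rho (u ++ [a]) = rho u ++ [0, a + 1] := by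
  simp [rho]

theorem R_eq_dropLast_append (m : ℕ) : R m = (R m).dropLast ++ [m] := by
  induction m with
  | zero => rfl
  | succ m ih =>
    have h : R (m + 1) = rho (R m).dropLast ++ [0] ++ [m + 1] := by
      rw [R_succ, ih, rho_concat, List.dropLast_concat, List.append_assoc]
      rfl
    rw [h, List.dropLast_concat]

theorem R_succ_eq (m : ℕ) : R (m + 1) = rho (R m).dropLast ++ [0, m + 1] := by
  rw [R_succ, ← rho_concat, ← R_eq_dropLast_append]

theorem dropLast_R_succ (m : ℕ) : (R (m + 1)).dropLast = rho (R m).dropLast ++ [0] := by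
  rw [R_succ_eq, ← List.singleton_append, ← List.append_assoc, List.dropLast_concat]

theorem dropLast_R_succ_eq_append (m : ℕ) : (R (m + 1)).dropLast = R m ++ (R m).dropLast := by
  induction m with
  | zero => rfl
  | succ m ih =>
    calc (R (m + 2)).dropLast
        = rho (R m ++ (R m).dropLast) ++ [0] := by rw [dropLast_R_succ, ih]
      _ = R (m + 1) ++ (rho (R m).dropLast ++ [0]) := by
        rw [rho_append, R_succ, List.append_assoc]
      _ = R (m + 1) ++ (R (m + 1)).dropLast := by rw [dropLast_R_succ]

theorem P0_append_zero (m : ℕ) : P0 m ++ [0] = (R (m + 1)).dropLast := by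
  rw [P0, dropLast_R_succ, List.dropLast_concat]

/-- For n ≥ 1, ψ₁(n)·0 = (n+1)·R_{n+1}[:−1]·(n+1)·R_{n+1}[:−1], which ends in a square. -/
theorem psi1_append_zero_square (n : ℕ) (hn : 1 ≤ n) :
    psi1 n ++ [0] =
      ((n + 1) :: (R (n + 1)).dropLast) ++ ((n + 1) :: (R (n + 1)).dropLast) ∧
    ∃ y : List ℕ, y ≠ [] ∧ (y ++ y) <:+ (psi1 n ++ [0]) := by
  have hsquare : psi1 n ++ [0] =
      ((n + 1) :: (R (n + 1)).dropLast) ++ ((n + 1) :: (R (n + 1)).dropLast) := by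
    have hpsi : psi1 n = (n + 1) :: P0 (n + 1) := if_neg (by omega)
    rw [hpsi, List.cons_append, P0_append_zero, dropLast_R_succ_eq_append]
    nth_rewrite 1 [R_eq_dropLast_append (n + 1)]
    simp
  refine ⟨hsquare, (n + 1) :: (R (n + 1)).dropLast, List.cons_ne_nil _ _, ?_⟩
  exact hsquare ▸ List.suffix_refl _
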